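/- arXiv:1407.5742 — 8 statements merged into one kernel-verified Lean document; each statement's English description precedes it below -/
import Mathlib

section
/- If A is a G_δ* set in a topological space X, i.e. A = ⋂_{n∈ℕ} A_n where each A_n is a co-zero set, then there exists a function f : X → [0,1] which is a pointwise limit of a sequence of continuous functions and satisfies A = f⁻¹({0}). -/
/-!
Write `B n = {g n > 0}` with `g n` continuous and `[0,1]`-valued. The indicator of the zero set
`{g n = 0}` is the pointwise limit of the continuous functions `(1 - g n) ^ k`, so it is of the
first Baire class, and so is `f = ∑ n, 2⁻ⁿ⁻¹ · 1_{g n = 0}`, since a dominated series of Baire-one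
functions is again Baire one. All terms of `f` are nonnegative, so `f x = 0` exactly when
`g n x ≠ 0` for every `n`, i.e. when `x ∈ ⋂ n, B n`; and `0 ≤ f ≤ ∑ n, 2⁻ⁿ⁻¹ = 1`.
-/

open Filter Topology Set

/-- A set is a co-zero set if it is `g ⁻¹' (0,1]` for some continuous `g : X → [0,1]`. -/
def IsCozeroSet {X : Type*} [TopologicalSpace X] (A : Set X) : Prop :=
  ∃ g : X → ℝ, Continuous g ∧ (∀ x, g x ∈ Set.Icc (0:ℝ) 1) ∧ A = g ⁻¹' Set.Ioc (0:ℝ) 1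

section BaireOne

variable {X : Type*} [TopologicalSpace X]

def IsBaireOne (f : X → ℝ) : Prop :=
  ∃ g : ℕ → X → ℝ, (∀ k, Continuous (g k)) ∧ ∀ x, Tendsto (fun k => g k x) atTop (𝓝 (f x))

/-- Clamping the approximants to `[-c, c]` keeps them continuous and does not change the limit. -/
lemma IsBaireOne.exists_approx_abs_le {f : X → ℝ} (hf : IsBaireOne f) {c : ℝ}
    (hfc : ∀ x, |f x| ≤ c) :
    ∃ g : ℕ → X → ℝ, (∀ k, Continuous (g k)) ∧ (∀ k x, |g k x| ≤ c) ∧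
      ∀ x, Tendsto (fun k => g k x) atTop (𝓝 (f x)) := by
  obtain ⟨g, hg_cont, hg_lim⟩ := hf
  refine ⟨fun k x => max (-c) (min c (g k x)), fun k => ?_, fun k x => ?_, fun x => ?_⟩
  · fun_prop
  · have hc : 0 ≤ c := (abs_nonneg _).trans (hfc x)
    rw [abs_le]
    exact ⟨le_max_left _ _, max_le (by linarith) (min_le_left _ _)⟩
  · obtain ⟨hfc_left, hfc_right⟩ := abs_le.mp (hfc x)
    have hclamp : max (-c) (min c (f x)) = f x := by
      rw [min_eq_right hfc_right, max_eq_right hfc_left]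
    rw [← hclamp]
    exact ((continuous_const.max (continuous_const.min continuous_id)).tendsto _).comp (hg_lim x)

lemma IsBaireOne.tsum {f : ℕ → X → ℝ} {c : ℕ → ℝ} (hf : ∀ n, IsBaireOne (f n))
    (hfc : ∀ n x, |f n x| ≤ c n) (hc : Summable c) :
    IsBaireOne fun x => ∑' n, f n x := by
  choose g hg_cont hg_le hg_lim using fun n => (hf n).exists_approx_abs_le (hfc n)
  exact ⟨fun k x => ∑' n, g n k x,
    fun k => continuous_tsum (fun n => hg_cont n k) hc fun n x => hg_le n k x,
    fun x => tendsto_tsum_of_dominated_convergence hc (fun n => hg_lim n x)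
      (Eventually.of_forall fun k n => hg_le n k x)⟩

lemma tendsto_one_sub_pow_indicator_zero {t : ℝ} (ht : t ∈ Icc 0 1) :
    Tendsto (fun k => (1 - t) ^ k) atTop (𝓝 (({0} : Set ℝ).indicator 1 t)) := by
  rcases eq_or_lt_of_le ht.1 with rfl | ht_pos
  · simp
  · rw [indicator_of_notMem (by simpa using ht_pos.ne')]
    exact tendsto_pow_atTop_nhds_zero_of_lt_one (by linarith [ht.2]) (by linarith)

lemma isBaireOne_indicator_preimage_zero {g : X → ℝ} (hg_cont : Continuous g)
    (hg_mem : ∀ x, g x ∈ Icc 0 1) :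
    IsBaireOne ((g ⁻¹' {0}).indicator 1) :=
  ⟨fun k x => (1 - g x) ^ k, fun k => by fun_prop,
    fun x => tendsto_one_sub_pow_indicator_zero (hg_mem x)⟩

lemma IsBaireOne.const_mul {f : X → ℝ} (hf : IsBaireOne f) (a : ℝ) :
    IsBaireOne fun x => a * f x := by
  obtain ⟨g, hg_cont, hg_lim⟩ := hf
  exact ⟨fun k x => a * g k x, fun k => (hg_cont k).const_mul a,
    fun x => (hg_lim x).const_mul a⟩

end BaireOne

section IndicatorSeries

variable {X : Type*} {c : ℕ → ℝ}

lemma mul_indicator_one_mem_Icc {a : ℝ} (ha : 0 ≤ a) (s : Set X) (x : X) :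
    a * s.indicator 1 x ∈ Icc 0 a := by
  by_cases hx : x ∈ s <;> simp [hx, ha]

lemma abs_mul_indicator_one_le {a : ℝ} (ha : 0 ≤ a) (s : Set X) (x : X) :
    |a * s.indicator 1 x| ≤ a := by
  obtain ⟨h_nonneg, h_le⟩ := mul_indicator_one_mem_Icc ha s x
  rwa [abs_of_nonneg h_nonneg]

lemma summable_mul_indicator_one (hc_nonneg : ∀ n, 0 ≤ c n) (hc : Summable c)
    (S : ℕ → Set X) (x : X) : Summable fun n => c n * (S n).indicator 1 x :=
  hc.of_nonneg_of_le (fun n => (mul_indicator_one_mem_Icc (hc_nonneg n) _ x).1)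
    fun n => (mul_indicator_one_mem_Icc (hc_nonneg n) _ x).2

lemma tsum_mul_indicator_one_mem_Icc (hc_nonneg : ∀ n, 0 ≤ c n) (hc : Summable c)
    (S : ℕ → Set X) (x : X) : ∑' n, c n * (S n).indicator 1 x ∈ Icc 0 (∑' n, c n) :=
  ⟨tsum_nonneg fun n => (mul_indicator_one_mem_Icc (hc_nonneg n) _ x).1,
    (summable_mul_indicator_one hc_nonneg hc S x).tsum_le_tsum
      (fun n => (mul_indicator_one_mem_Icc (hc_nonneg n) _ x).2) hc⟩

lemma tsum_mul_indicator_one_eq_zero_iff (hc_pos : ∀ n, 0 < c n) (hc : Summable c)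
    (S : ℕ → Set X) (x : X) : ∑' n, c n * (S n).indicator 1 x = 0 ↔ ∀ n, x ∉ S n := by
  rw [← (summable_mul_indicator_one (fun n => (hc_pos n).le) hc S x).hasSum_iff,
    hasSum_zero_iff_of_nonneg fun n => (mul_indicator_one_mem_Icc (hc_pos n).le _ x).1,
    funext_iff]
  simp [(hc_pos _).ne']

end IndicatorSeries

/-- If `A` is a countable intersection of co-zero sets, then `A = f ⁻¹' {0}` for a
function `f : X → [0,1]` of the first Baire class. -/
theorem gdelta_star_eq_zero_set_of_baire_one {X : Type*} [TopologicalSpace X]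
    (A : Set X) (B : ℕ → Set X) (hB : ∀ n, IsCozeroSet (B n))
    (hA : A = ⋂ n, B n) :
    ∃ f : X → ℝ, (∀ x, f x ∈ Set.Icc (0:ℝ) 1) ∧
      (∃ g : ℕ → X → ℝ, (∀ k, Continuous (g k)) ∧
        ∀ x, Filter.Tendsto (fun k => g k x) Filter.atTop (nhds (f x))) ∧
      A = f ⁻¹' {0} := by
  choose g hg_cont hg_mem hB_eq using hB
  set c : ℕ → ℝ := fun n => 1 / 2 / 2 ^ n
  have hc_pos : ∀ n, 0 < c n := fun n => by positivity
  have hc : Summable c := summable_geometric_two' 1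
  refine ⟨fun x => ∑' n, c n * (g n ⁻¹' {0}).indicator 1 x, fun x => ?_,
    IsBaireOne.tsum (fun n => (isBaireOne_indicator_preimage_zero (hg_cont n) (hg_mem n)).const_mul
      (c n)) (fun n => abs_mul_indicator_one_le (hc_pos n).le _) hc, ?_⟩
  · simpa only [c, tsum_geometric_two'] using
      tsum_mul_indicator_one_mem_Icc (fun n => (hc_pos n).le) hc (fun n => g n ⁻¹' {0}) x
  ext x
  rw [hA, mem_iInter, mem_preimage, mem_singleton_iff,
    tsum_mul_indicator_one_eq_zero_iff hc_pos hc]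
  refine forall_congr' fun n => ?_
  rw [hB_eq n]
  simp [(hg_mem n x).2, (hg_mem n x).1.lt_iff_ne']
end

section
/- Let X and Y be topological spaces, let (f_k) be a sequence of functions f_k : X → Y converging pointwise to f : X → Y, and let F ⊆ Y be a closed set such that F = ⋂_{n} cl(V_n) for a sequence of open sets V_n with cl(V_{n+1}) ⊆ V_n for all n. Then f⁻¹(F) = ⋂_{n=1}^∞ ⋃_{k=n}^∞ f_k⁻¹(V_n). -/
open Filter Set

/-- If `f_k → f` pointwise and `F = ⋂ n, closure (V n)` with `V n` open and
`closure (V (n+1)) ⊆ V n`, then `f ⁻¹' F = ⋂ n, ⋃ k ≥ n, f_k ⁻¹' (V n)`. -/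
theorem preimage_closed_of_pointwise_limit {X Y : Type*} [TopologicalSpace X]
    [TopologicalSpace Y] (f : X → Y) (fk : ℕ → X → Y)
    (hlim : ∀ x, Tendsto (fun k => fk k x) atTop (nhds (f x)))
    (F : Set Y) (hF : IsClosed F) (V : ℕ → Set Y) (hV : ∀ n, IsOpen (V n))
    (hmono : ∀ n, closure (V (n + 1)) ⊆ V n) (hFeq : F = ⋂ n, closure (V n)) :
    f ⁻¹' F = ⋂ n, ⋃ k, ⋃ (_ : n ≤ k), fk k ⁻¹' V n := by
  have hanti : ∀ {m n : ℕ}, n ≤ m → V m ⊆ V n := by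
    intro m n h
    induction h with
    | refl => exact subset_rfl
    | step h ih => exact fun y hy => ih (hmono _ (subset_closure hy))
  ext x
  simp only [mem_preimage, mem_iInter, mem_iUnion]
  constructor
  · intro hx n
    have h1 : f x ∈ V n := by
      apply hmono n
      have := hFeq ▸ hx
      exact (mem_iInter.1 this) (n + 1)
    have := (hlim x).eventually ((hV n).mem_nhds h1)
    obtain ⟨k, hk, hk2⟩ := ((this.and (eventually_ge_atTop n)).exists)
    exact ⟨k, hk2, hk⟩
  · intro hx
    rw [hFeq, mem_iInter]
    intro n
    have hfreq : ∃ᶠ k in atTop, fk k x ∈ V (n + 1) := by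
      rw [frequently_atTop]
      intro a
      obtain ⟨k, hk, hkV⟩ := hx (max a (n + 1))
      exact ⟨k, le_trans (le_max_left _ _) hk,
        hanti (le_max_right _ _) hkV⟩
    have : f x ∈ closure (V (n + 1)) :=
      mem_closure_of_frequently_of_tendsto hfreq (hlim x)
    exact subset_closure (hmono n this)
end

section
/- Let X be a topological space, Y a perfectly normal topological space, and f : X → Y a pointwise limit of a sequence of continuous functions f_k : X → Y. Then for every closed set F ⊆ Y, the preimage f⁻¹(F) is a G_δ set in X; equivalently, for every open V ⊆ Y, f⁻¹(V) is an F_σ set in X. -/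
open Filter Set

private lemma nested_of_closed {Y : Type*} [TopologicalSpace Y] [PerfectlyNormalSpace Y]
    {F : Set Y} (hF : IsClosed F) :
    ∃ V : ℕ → Set Y, (∀ n, IsOpen (V n)) ∧ (∀ n, F ⊆ V n) ∧
      (∀ n, closure (V (n + 1)) ⊆ V n) ∧ F = ⋂ n, closure (V n) := by
  obtain ⟨U, hUopen, hUeq⟩ := (PerfectlyNormalSpace.closed_gdelta hF).eq_iInter_nat
  have hFU : ∀ n, F ⊆ U n := fun n => hUeq ▸ iInter_subset U n
  have step : ∀ n : ℕ, ∀ W : {W : Set Y // IsOpen W ∧ F ⊆ W},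
      ∃ V : {V : Set Y // IsOpen V ∧ F ⊆ V}, closure V.1 ⊆ W.1 ∩ U n := by
    rintro n ⟨W, hW, hFW⟩
    obtain ⟨V, hVo, hFV, hcl⟩ := normal_exists_closure_subset hF (hW.inter (hUopen n))
      (subset_inter hFW (hFU n))
    exact ⟨⟨V, hVo, hFV⟩, hcl⟩
  choose g hg using step
  let V : ℕ → {V : Set Y // IsOpen V ∧ F ⊆ V} :=
    fun n => Nat.rec (g 0 ⟨univ, isOpen_univ, subset_univ F⟩) (fun n Vn => g (n + 1) Vn) n
  refine ⟨fun n => (V n).1, fun n => (V n).2.1, fun n => (V n).2.2, ?_, ?_⟩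
  · intro n
    exact (hg (n + 1) (V n)).trans inter_subset_left
  · apply Subset.antisymm
    · exact subset_iInter fun n => ((V n).2.2).trans subset_closure
    · intro y hy
      have hy' : ∀ m, y ∈ closure (V m).1 := mem_iInter.1 hy
      rw [hUeq]
      refine mem_iInter.2 fun n => ?_
      cases n with
      | zero =>
        exact ((hg 0 ⟨univ, isOpen_univ, subset_univ F⟩).trans inter_subset_right) (hy' 0)
      | succ m =>
        exact ((hg (m + 1) (V m)).trans inter_subset_right) (hy' (m + 1))

/-- A pointwise limit of continuous functions into a perfectly normal space pulls back
closed sets to `G_δ` sets (equivalently, open sets to `F_σ` sets). -/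
theorem baire_one_lebesgue_one {X Y : Type*} [TopologicalSpace X] [TopologicalSpace Y]
    [PerfectlyNormalSpace Y] (f : X → Y) (fk : ℕ → X → Y)
    (hcont : ∀ k, Continuous (fk k))
    (hlim : ∀ x, Tendsto (fun k => fk k x) atTop (nhds (f x))) :
    (∀ F : Set Y, IsClosed F → IsGδ (f ⁻¹' F)) ∧
      (∀ V : Set Y, IsOpen V → ∃ C : ℕ → Set X, (∀ n, IsClosed (C n)) ∧ f ⁻¹' V = ⋃ n, C n) := by
  have part1 : ∀ F : Set Y, IsClosed F → IsGδ (f ⁻¹' F) := by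
    intro F hF
    obtain ⟨V, hVo, hFV, hVnest, hFeq⟩ := nested_of_closed hF
    have hVanti : ∀ {m n : ℕ}, m ≤ n → V n ⊆ V m := by
      intro m n hmn
      induction n with
      | zero => simp_all
      | succ k ih =>
        rcases Nat.lt_or_ge m (k + 1) with h | h
        · exact (subset_closure.trans (hVnest k)).trans (ih (Nat.lt_succ_iff.mp h))
        · have : m = k + 1 := le_antisymm (by omega) h
          subst this; rfl
    have key : f ⁻¹' F = ⋂ n, ⋃ k ∈ Ici n, fk k ⁻¹' (V n) := by
      ext x
      simp only [mem_preimage, mem_iInter, mem_iUnion, mem_Ici, exists_prop]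
      constructor
      · intro hx n
        have : ∀ᶠ k in atTop, fk k x ∈ V n :=
          (hlim x).eventually ((hVo n).mem_nhds (hFV n hx))
        obtain ⟨k, hk, hk'⟩ := (this.and (eventually_ge_atTop n)).exists
        exact ⟨k, hk', hk⟩
      · intro h
        choose k hk hk' using h
        have hktop : Tendsto k atTop atTop := tendsto_atTop_mono hk tendsto_id
        have hlim' : Tendsto (fun n => fk (k n) x) atTop (nhds (f x)) :=
          (hlim x).comp hktop
        rw [hFeq]
        refine mem_iInter.2 fun m => ?_
        refine isClosed_closure.mem_of_tendsto hlim' ?_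
        filter_upwards [eventually_ge_atTop m] with n hn
        exact subset_closure (hVanti hn (hk' n))
    rw [key]
    exact .iInter_of_isOpen fun n => isOpen_biUnion fun k _ => (hVo n).preimage (hcont k)
  refine ⟨part1, fun W hW => ?_⟩
  obtain ⟨U, hUo, hUeq⟩ := (part1 Wᶜ hW.isClosed_compl).eq_iInter_nat
  refine ⟨fun n => (U n)ᶜ, fun n => (hUo n).isClosed_compl, ?_⟩
  have : f ⁻¹' W = (f ⁻¹' Wᶜ)ᶜ := by simp [preimage_compl]
  rw [this, hUeq, compl_iInter]
end

section
/- The Sorgenfrey line is a strong PP-space: for every dense set D ⊆ ℝ (in the Sorgenfrey topology), the covers U_{i,n} = [(i−1)/n, i/n) for i ∈ ℤ, n ∈ ℕ, together with points x_{i,n} ∈ [i/n, (i+1)/n) ∩ D, satisfy that whenever x ∈ U_{i_n,n} for all n, the points x_{i_n,n} converge to x in the Sorgenfrey topology. -/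
open Filter Set

/-- The Sorgenfrey (lower limit) topology on `ℝ`, generated by half-open intervals `[a, b)`. -/
def sorgenfrey : TopologicalSpace ℝ :=
  TopologicalSpace.generateFrom {s : Set ℝ | ∃ a b : ℝ, a < b ∧ s = Set.Ico a b}

open Topology

/-! Sorgenfrey neighbourhoods of `r` are exactly the usual right neighbourhoods `𝓝[≥] r`. The chosen
point `x (idx n) n` lies in the cell just right of the one containing `r`, so
`r < x (idx n) n ≤ r + 2 / (n + 1)`, and the squeeze theorem gives convergence from the right. -/

theorem nhds_sorgenfrey (r : ℝ) : @nhds ℝ sorgenfrey r = 𝓝[≥] r := by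
  refine le_antisymm ((nhdsGE_basis_Ico r).ge_iff.2 fun b hrb => ?_) ?_
  · exact @IsOpen.mem_nhds ℝ sorgenfrey _ _
      (TopologicalSpace.isOpen_generateFrom_of_mem ⟨r, b, hrb, rfl⟩) (left_mem_Ico.2 hrb)
  · rw [sorgenfrey, TopologicalSpace.nhds_generateFrom]
    refine le_iInf₂ ?_
    rintro _ ⟨hrs, a, b, -, rfl⟩
    exact le_principal_iff.2 <| mem_of_superset (Ico_mem_nhdsGE hrs.2) (Ico_subset_Ico_left hrs.1)

theorem tendsto_nhdsGE_of_mem_Icc_add {α ι : Type*} [AddCommGroup α] [LinearOrder α]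
    [IsOrderedAddMonoid α] [TopologicalSpace α] [OrderTopology α] {l : Filter ι} {u ε : ι → α}
    {r : α} (hε : Tendsto ε l (𝓝 0)) (hu : ∀ᶠ i in l, u i ∈ Icc r (r + ε i)) :
    Tendsto u l (𝓝[≥] r) := by
  have hrε : Tendsto (fun i => r + ε i) l (𝓝 r) := by simpa using hε.const_add r
  refine tendsto_nhdsWithin_iff.2 ⟨?_, hu.mono fun _ hi => hi.1⟩
  exact tendsto_of_tendsto_of_tendsto_of_le_of_le' tendsto_const_nhds hrε
    (hu.mono fun _ hi => hi.1) (hu.mono fun _ hi => hi.2)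

theorem mem_Icc_add_two_div_of_adjacent_Ico {𝕜 : Type*} [Field 𝕜] [LinearOrder 𝕜]
    [IsStrictOrderedRing 𝕜] {r y w i : 𝕜} (hw : 0 < w) (hr : r ∈ Ico ((i - 1) / w) (i / w))
    (hy : y ∈ Ico (i / w) ((i + 1) / w)) : y ∈ Icc r (r + 2 / w) := by
  have hcell : (i + 1) / w = (i - 1) / w + 2 / w := by field_simp; ring
  exact ⟨hr.2.le.trans hy.1, by linarith [hr.1, hy.2]⟩

theorem sorgenfrey_strong_PP_general (D : Set ℝ)
    (x : ℤ → ℕ → ℝ)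
    (hx : ∀ (i : ℤ) (n : ℕ),
      x i n ∈ Set.Ico ((i : ℝ) / (n + 1)) (((i : ℝ) + 1) / (n + 1)) ∩ D) :
    ∀ (r : ℝ) (idx : ℕ → ℤ),
      (∀ n : ℕ, r ∈ Set.Ico (((idx n : ℝ) - 1) / (n + 1)) ((idx n : ℝ) / (n + 1))) →
      Tendsto (fun n => x (idx n) n) atTop (@nhds ℝ sorgenfrey r) := by
  intro r idx hr
  have hwidth : Tendsto (fun n : ℕ => 2 / ((n : ℝ) + 1)) atTop (𝓝 0) := by
    simpa using (tendsto_add_atTop_iff_nat 1).2 (tendsto_const_div_atTop_nhds_zero_nat (2 : ℝ))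
  rw [nhds_sorgenfrey]
  exact tendsto_nhdsGE_of_mem_Icc_add hwidth <| .of_forall fun n =>
    mem_Icc_add_two_div_of_adjacent_Ico n.cast_add_one_pos (hr n) (hx (idx n) n).1

/-- The Sorgenfrey line is a strong PP-space: given a dense `D`, the covers
`U (i, n) = [(i - 1)/(n+1), i/(n+1))` together with points
`x i n ∈ [i/(n+1), (i+1)/(n+1)) ∩ D` witness the strong PP-property: whenever
`r ∈ U (idx n, n)` for all `n`, the points `x (idx n) n` converge to `r`. -/
theorem sorgenfrey_strong_PP (D : Set ℝ) (hD : @Dense ℝ sorgenfrey D)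
    (x : ℤ → ℕ → ℝ)
    (hx : ∀ (i : ℤ) (n : ℕ),
      x i n ∈ Set.Ico ((i : ℝ) / (n + 1)) (((i : ℝ) + 1) / (n + 1)) ∩ D) :
    ∀ (r : ℝ) (idx : ℕ → ℤ),
      (∀ n : ℕ, r ∈ Set.Ico (((idx n : ℝ) - 1) / (n + 1)) ((idx n : ℝ) / (n + 1))) →
      Tendsto (fun n => x (idx n) n) atTop (@nhds ℝ sorgenfrey r) :=
  sorgenfrey_strong_PP_general D x hx
end

section
/- Let X₁ ⊆ X₂ be closed metrizable subspaces of a space X, and let d₁ be a metric on X₁ compatible with its topology. Then (Hausdorff extension theorem) there exists a metric d₂ on X₂ compatible with the topology of X₂ such that d₂ restricted to X₁ × X₁ equals d₁. -/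
open Metric Set BoundedContinuousFunction

section KurAux

variable {α : Type*} [MetricSpace α]

/-- Kuratowski-type embedding of a metric space into bounded continuous functions. -/
noncomputable def kurE (a₀ a : α) : α →ᵇ ℝ :=
  BoundedContinuousFunction.mkOfBound
    ⟨fun b => dist a b - dist a₀ b,
      (continuous_const.dist continuous_id).sub (continuous_const.dist continuous_id)⟩
    (2 * dist a a₀)
    (by
      intro x y
      have h1 : |dist a x - dist a₀ x| ≤ dist a a₀ := abs_dist_sub_le a a₀ x
      have h2 : |dist a y - dist a₀ y| ≤ dist a a₀ := abs_dist_sub_le a a₀ y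
      rw [Real.dist_eq]
      simp only [ContinuousMap.coe_mk]
      obtain ⟨h1a, h1b⟩ := abs_le.mp h1
      obtain ⟨h2a, h2b⟩ := abs_le.mp h2
      rw [abs_le]
      constructor <;> linarith)

theorem kurE_apply (a₀ a b : α) : kurE a₀ a b = dist a b - dist a₀ b := rfl

theorem kurE_dist_le (a₀ a b : α) : dist (kurE a₀ a) (kurE a₀ b) ≤ dist a b := by
  refine (BoundedContinuousFunction.dist_le dist_nonneg).2 fun x => ?_
  rw [Real.dist_eq, kurE_apply, kurE_apply]
  have h : dist a x - dist a₀ x - (dist b x - dist a₀ x) = dist a x - dist b x := by ring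
  rw [h]
  exact abs_dist_sub_le a b x

theorem kurE_dist_ge (a₀ a b : α) : dist a b ≤ dist (kurE a₀ a) (kurE a₀ b) := by
  have h := BoundedContinuousFunction.dist_coe_le_dist (f := kurE a₀ a) (g := kurE a₀ b) b
  rw [Real.dist_eq, kurE_apply, kurE_apply] at h
  have h2 : dist a b - dist a₀ b - (dist b b - dist a₀ b) = dist a b := by
    rw [dist_self]; ring
  rwa [h2, abs_of_nonneg dist_nonneg] at h

end KurAux

/-- Hausdorff's metric extension theorem, version for an ambient metric space. -/
theorem hausdorff_metric_extension_aux {X : Type*} [mX : MetricSpace X] (s : Set X)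
    (hs : IsClosed s) (m₁ : MetricSpace s)
    (hcompat : m₁.toUniformSpace.toTopologicalSpace = instTopologicalSpaceSubtype) :
    ∃ m₂ : MetricSpace X,
      m₂.toUniformSpace.toTopologicalSpace = mX.toUniformSpace.toTopologicalSpace ∧
      ∀ x y : s, m₂.dist (x : X) (y : X) = m₁.dist x y := by
  classical
  rcases s.eq_empty_or_nonempty with hse | hne
  · refine ⟨‹MetricSpace X›, rfl, ?_⟩
    rintro ⟨x, hx⟩
    simp [hse] at hx
  -- basic facts about `m₁`
  have d0 : ∀ a : s, m₁.dist a a = 0 := m₁.dist_self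
  have dcomm : ∀ a b : s, m₁.dist a b = m₁.dist b a := m₁.dist_comm
  have dtri : ∀ a b c : s, m₁.dist a c ≤ m₁.dist a b + m₁.dist b c := m₁.dist_triangle
  have dnn : ∀ a b : s, 0 ≤ m₁.dist a b := by
    intro a b
    have h := dtri a b a
    rw [d0, dcomm b a] at h
    linarith
  -- transfer of neighborhoods between `m₁` and the subspace topology
  have hnhds : ∀ x₀ : s, @nhds s m₁.toUniformSpace.toTopologicalSpace x₀
      = @nhds s instTopologicalSpaceSubtype x₀ := by
    rw [hcompat]
    intro x₀; rfl
  have hI : ∀ (x₀ : s) (ε : ℝ), 0 < ε → ∃ δ > 0, ∀ b : s,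
      dist (b : X) (x₀ : X) < δ → m₁.dist b x₀ < ε := by
    intro x₀ ε hε
    have hball : {b : s | m₁.dist b x₀ < ε} ∈ @nhds s m₁.toUniformSpace.toTopologicalSpace x₀ :=
      @Metric.ball_mem_nhds s m₁.toPseudoMetricSpace x₀ ε hε
    rw [hnhds x₀] at hball
    rcases x₀ with ⟨x₀v, hx₀v⟩
    rw [nhds_subtype_eq_comap, Filter.mem_comap] at hball
    obtain ⟨W, hW, hWsub⟩ := hball
    obtain ⟨δ, hδ, hδW⟩ := Metric.mem_nhds_iff.mp hW
    exact ⟨δ, hδ, fun b hb => hWsub (hδW (by rwa [Metric.mem_ball]))⟩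
  have hII : ∀ (x₀ : s) (ε : ℝ), 0 < ε → ∃ δ > 0, ∀ b : s,
      m₁.dist b x₀ < δ → dist (b : X) (x₀ : X) < ε := by
    intro x₀ ε hε
    have hmem : {b : s | dist (b : X) (x₀ : X) < ε} ∈ @nhds s instTopologicalSpaceSubtype x₀ := by
      rcases x₀ with ⟨x₀v, hx₀v⟩
      rw [nhds_subtype_eq_comap]
      exact Filter.preimage_mem_comap (Metric.ball_mem_nhds _ hε)
    rw [← hnhds x₀] at hmem
    obtain ⟨δ, hδ, hδsub⟩ := (@Metric.mem_nhds_iff s m₁.toPseudoMetricSpace _ _).mp hmem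
    exact ⟨δ, hδ, fun b hb => hδsub hb⟩
  -- the Kuratowski embedding of `(s, m₁)`
  obtain ⟨p₀, hp₀⟩ := hne
  let a₀ : s := ⟨p₀, hp₀⟩
  let K : s → @BoundedContinuousFunction s ℝ m₁.toUniformSpace.toTopologicalSpace _ :=
    @kurE s m₁ a₀
  have hKle : ∀ a b : s, dist (K a) (K b) ≤ m₁.dist a b := fun a b => @kurE_dist_le s m₁ a₀ a b
  have hKge : ∀ a b : s, m₁.dist a b ≤ dist (K a) (K b) := fun a b => @kurE_dist_ge s m₁ a₀ a b
  -- partition of unity on the complement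
  have hUo : IsOpen sᶜ := hs.isOpen_compl
  have hr : ∀ z : ↥sᶜ, 0 < infDist (z : X) s :=
    fun z => (hs.notMem_iff_infDist_pos ⟨p₀, hp₀⟩).1 z.2
  let V : ↥sᶜ → Set ↥sᶜ := fun z => Subtype.val ⁻¹' (ball (z : X) (infDist (z : X) s / 4))
  have hVo : ∀ z, IsOpen (V z) := fun z => Metric.isOpen_ball.preimage continuous_subtype_val
  have hVc : (univ : Set ↥sᶜ) ⊆ ⋃ z, V z := by
    intro w _
    refine mem_iUnion.2 ⟨w, ?_⟩
    have := hr w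
    simp only [V, mem_preimage, Metric.mem_ball, dist_self]
    linarith
  obtain ⟨f, hf⟩ := PartitionOfUnity.exists_isSubordinate isClosed_univ V hVo hVc
  -- anchor points in `s`
  have hA : ∀ z : ↥sᶜ, ∃ p, p ∈ s ∧ dist (z : X) p < 2 * infDist (z : X) s := by
    intro z
    have hlt : infDist (z : X) s < 2 * infDist (z : X) s := by have := hr z; linarith
    obtain ⟨p, hp, hd⟩ := (Metric.infDist_lt_iff ⟨p₀, hp₀⟩).1 hlt
    exact ⟨p, hp, hd⟩
  choose A hAmem hAdist using hA
  let Ahat : ↥sᶜ → s := fun z => ⟨A z, hAmem z⟩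
  let G : ↥sᶜ → @BoundedContinuousFunction s ℝ m₁.toUniformSpace.toTopologicalSpace _ :=
    fun w => ∑ᶠ z, f z w • K (Ahat z)
  have hGcont : Continuous G :=
    f.continuous_finsum_smul fun i x _ => continuousAt_const
  let F : X → @BoundedContinuousFunction s ℝ m₁.toUniformSpace.toTopologicalSpace _ :=
    fun x => if h : x ∈ s then K ⟨x, h⟩ else G ⟨x, h⟩
  have hFs : ∀ (x : X) (hx : x ∈ s), F x = K ⟨x, hx⟩ := fun x hx => dif_pos hx
  have hFU : ∀ (x : X) (hx : x ∉ s), F x = G ⟨x, hx⟩ := fun x hx => dif_neg hx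
  -- quantitative continuity of `F` at points of `s`
  have hFclose : ∀ (x : X) (hx : x ∈ s) (ε : ℝ), 0 < ε → ∃ δ > 0, ∀ y : X,
      dist x y < δ → dist (F x) (F y) ≤ ε := by
    intro x hx ε hε
    obtain ⟨δ₀, hδ₀, hI0⟩ := hI ⟨x, hx⟩ ε hε
    refine ⟨δ₀ / 4, by positivity, fun y hy => ?_⟩
    by_cases hys : y ∈ s
    · rw [hFs x hx, hFs y hys]
      have h1 : dist (y : X) ((⟨x, hx⟩ : s) : X) < δ₀ := by
        rw [dist_comm] at hy
        calc dist y x < δ₀ / 4 := hy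
          _ ≤ δ₀ := by linarith
      have h2 := hI0 ⟨y, hys⟩ h1
      calc dist (K ⟨x, hx⟩) (K ⟨y, hys⟩) ≤ m₁.dist ⟨x, hx⟩ ⟨y, hys⟩ := hKle _ _
        _ = m₁.dist ⟨y, hys⟩ ⟨x, hx⟩ := dcomm _ _
        _ ≤ ε := le_of_lt h2
    · rw [hFs x hx, hFU y hys]
      have hmem : (∑ᶠ z, f z (⟨y, hys⟩ : ↥sᶜ) • K (Ahat z)) ∈
          Metric.closedBall (K ⟨x, hx⟩) ε := by
        refine f.finsum_smul_mem_convex (g := fun z _ => K (Ahat z)) (mem_univ _) (fun z hz => ?_) (convex_closedBall _ _)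
        have hwV : (⟨y, hys⟩ : ↥sᶜ) ∈ V z := hf z (subset_tsupport _ hz)
        have h1 : dist y (z : X) < infDist (z : X) s / 4 := by
          exact hwV
        have h2 : infDist (z : X) s ≤ dist (z : X) x := Metric.infDist_le_dist_of_mem hx
        have h3 : dist (z : X) x ≤ dist (z : X) y + dist y x := dist_triangle _ _ _
        have h4 : dist y x < δ₀ / 4 := by rwa [dist_comm] at hy
        have h5 : infDist (z : X) s < δ₀ / 3 := by
          rw [dist_comm (z : X) y] at h3
          linarith
        have h6 : dist ((Ahat z : s) : X) x < δ₀ := by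
          have hAd := hAdist z
          calc dist ((Ahat z : s) : X) x
              ≤ dist ((Ahat z : s) : X) (z : X) + dist (z : X) y + dist y x :=
                dist_triangle4 _ _ _ _
            _ < 2 * infDist (z : X) s + infDist (z : X) s / 4 + δ₀ / 4 := by
                rw [dist_comm ((Ahat z : s) : X) (z : X), dist_comm (z : X) y]
                exact add_lt_add (add_lt_add hAd h1) h4
            _ < δ₀ := by linarith
        have h7 : m₁.dist (Ahat z) ⟨x, hx⟩ < ε := hI0 (Ahat z) h6
        rw [Metric.mem_closedBall]
        exact le_trans (hKle _ _) (le_of_lt h7)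
      have hmem' : G ⟨y, hys⟩ ∈ Metric.closedBall (K ⟨x, hx⟩) ε := hmem
      have := Metric.mem_closedBall.mp hmem'
      rwa [dist_comm] at this
  -- continuity of `F` everywhere (ε-δ form)
  have hFcontAt : ∀ x : X, ∀ ε : ℝ, 0 < ε → ∃ δ > 0, ∀ y : X,
      dist x y < δ → dist (F x) (F y) < ε := by
    intro x ε hε
    by_cases hx : x ∈ s
    · obtain ⟨δ, hδ, h⟩ := hFclose x hx (ε / 2) (by positivity)
      exact ⟨δ, hδ, fun y hy => lt_of_le_of_lt (h y hy) (by linarith)⟩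
    · have hcont : ContinuousOn F sᶜ := by
        rw [continuousOn_iff_continuous_restrict]
        have hres : sᶜ.restrict F = G := funext fun w => hFU (w : X) w.2
        rw [show sᶜ.domRestrict F = G from hres]
        exact hGcont
      have hca : ContinuousAt F x := hcont.continuousAt (hUo.mem_nhds hx)
      obtain ⟨δ, hδ, h⟩ := Metric.continuousAt_iff.1 hca ε hε
      refine ⟨δ, hδ, fun y hy => ?_⟩
      have := h (show dist y x < δ by rwa [dist_comm])
      rwa [dist_comm (F y) (F x)] at this
  -- the auxiliary pseudometrics
  let q : X → X → ℝ := fun x y => dist (F x) (F y)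
  let ρ : X → X → ℝ := fun x y => dist x y + q x y
  have hρ0 : ∀ x, ρ x x = 0 := by intro x; simp [ρ, q]
  have hρcomm : ∀ x y, ρ x y = ρ y x := by
    intro x y; simp only [ρ, q]; rw [dist_comm, dist_comm (F x) (F y)]
  have hρtri : ∀ x y z, ρ x z ≤ ρ x y + ρ y z := by
    intro x y z
    have h1 := dist_triangle x y z
    have h2 := dist_triangle (F x) (F y) (F z)
    simp only [ρ, q]
    linarith
  have hρnn : ∀ x y, 0 ≤ ρ x y := fun x y => add_nonneg dist_nonneg dist_nonneg
  have hρdist : ∀ x y, dist x y ≤ ρ x y := fun x y => le_add_of_nonneg_right dist_nonneg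
  have hρs : ∀ a b : s, m₁.dist a b ≤ ρ (a : X) (b : X) := by
    intro a b
    have hq : q (a : X) (b : X) = dist (K a) (K b) := by
      simp only [q, hFs (a : X) a.2, hFs (b : X) b.2]
    have : m₁.dist a b ≤ q (a : X) (b : X) := by rw [hq]; exact hKge a b
    have hd : (0 : ℝ) ≤ dist (a : X) (b : X) := dist_nonneg
    simp only [ρ]
    linarith
  -- the chain distance
  let S : X → X → Set ℝ := fun x y =>
    insert (ρ x y) (Set.range fun p : s × s =>
      ρ x (p.1 : X) + m₁.dist p.1 p.2 + ρ (p.2 : X) y)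
  let D : X → X → ℝ := fun x y => sInf (S x y)
  have hSne : ∀ x y, (S x y).Nonempty := fun x y => ⟨ρ x y, mem_insert _ _⟩
  have hSmem : ∀ x y c, c ∈ S x y ↔ (c = ρ x y ∨ ∃ p : s × s,
      ρ x (p.1 : X) + m₁.dist p.1 p.2 + ρ (p.2 : X) y = c) := by
    intro x y c
    simp only [S, mem_insert_iff, mem_range]
  have hSnn : ∀ x y, ∀ c ∈ S x y, 0 ≤ c := by
    intro x y c hc
    rcases (hSmem x y c).1 hc with rfl | ⟨p, rfl⟩
    · exact hρnn x y
    · have h1 := dnn p.1 p.2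
      have h2 := hρnn x (p.1 : X)
      have h3 := hρnn (p.2 : X) y
      linarith
  have hSbdd : ∀ x y, BddBelow (S x y) := fun x y => ⟨0, fun c hc => hSnn x y c hc⟩
  have hDle : ∀ x y c, c ∈ S x y → D x y ≤ c := fun x y c hc => csInf_le (hSbdd x y) hc
  have hDnn : ∀ x y, 0 ≤ D x y := fun x y => le_csInf (hSne x y) (hSnn x y)
  have hDρ : ∀ x y, D x y ≤ ρ x y := fun x y => hDle x y _ (mem_insert _ _)
  have hchain : ∀ x y (a b : s),
      ρ x (a : X) + m₁.dist a b + ρ (b : X) y ∈ S x y := fun x y a b =>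
    mem_insert_of_mem _ ⟨(a, b), rfl⟩
  have hDself : ∀ x, D x x = 0 := fun x =>
    le_antisymm (le_trans (hDρ x x) (le_of_eq (hρ0 x))) (hDnn x x)
  have hDcomm : ∀ x y, D x y = D y x := by
    have key : ∀ x y, D x y ≤ D y x := by
      intro x y
      refine le_csInf (hSne y x) fun c hc => ?_
      rcases (hSmem y x c).1 hc with rfl | ⟨p, rfl⟩
      · exact (hDρ x y).trans (le_of_eq (hρcomm x y))
      · refine (hDle x y _ (hchain x y p.2 p.1)).trans (le_of_eq ?_)
        rw [hρcomm x (p.2 : X), hρcomm (p.1 : X) y, dcomm p.2 p.1]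
        ring
    exact fun x y => le_antisymm (key x y) (key y x)
  have hDtri : ∀ x y z, D x z ≤ D x y + D y z := by
    intro x y z
    have key : ∀ c₁ ∈ S x y, ∀ c₂ ∈ S y z, D x z ≤ c₁ + c₂ := by
      intro c₁ hc₁ c₂ hc₂
      rcases (hSmem x y c₁).1 hc₁ with rfl | ⟨⟨a, b⟩, rfl⟩ <;>
        rcases (hSmem y z c₂).1 hc₂ with rfl | ⟨⟨c, e⟩, rfl⟩
      · exact (hDρ x z).trans (hρtri x y z)
      · refine (hDle x z _ (hchain x z c e)).trans ?_
        have h1 := hρtri x y (c : X)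
        linarith
      · refine (hDle x z _ (hchain x z a b)).trans ?_
        have h1 := hρtri (b : X) y z
        linarith
      · refine (hDle x z _ (hchain x z a e)).trans ?_
        have h1 : m₁.dist a e ≤ m₁.dist a b + m₁.dist b c + m₁.dist c e := by
          have h2 := dtri a b e
          have h3 := dtri b c e
          linarith
        have h4 : m₁.dist b c ≤ ρ (b : X) (c : X) := hρs b c
        have h5 : ρ (b : X) (c : X) ≤ ρ (b : X) y + ρ y (c : X) := hρtri _ _ _
        linarith
    have h1 : ∀ c₂ ∈ S y z, D x z - c₂ ≤ D x y := by
      intro c₂ hc₂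
      refine le_csInf (hSne x y) fun c₁ hc₁ => ?_
      have := key c₁ hc₁ c₂ hc₂
      linarith
    have h2 : D x z - D x y ≤ D y z := by
      refine le_csInf (hSne y z) fun c₂ hc₂ => ?_
      have := h1 c₂ hc₂
      linarith
    linarith
  have hDs : ∀ a b : s, D (a : X) (b : X) = m₁.dist a b := by
    intro a b
    apply le_antisymm
    · have h := hDle (a : X) (b : X) _ (hchain (a : X) (b : X) a b)
      rwa [hρ0, hρ0, zero_add, add_zero] at h
    · refine le_csInf (hSne _ _) fun c hc => ?_
      rcases (hSmem _ _ c).1 hc with rfl | ⟨⟨p, p'⟩, rfl⟩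
      · exact hρs a b
      · have h1 : m₁.dist a p ≤ ρ (a : X) (p : X) := hρs a p
        have h2 : m₁.dist p' b ≤ ρ (p' : X) (b : X) := hρs p' b
        have h3 := dtri a p b
        have h4 := dtri p p' b
        linarith
  have hDpos : ∀ x y, D x y = 0 → x = y := by
    intro x y h0
    by_contra hxy
    have hlb : ∃ c, 0 < c ∧ ∀ r ∈ S x y, c ≤ r := by
      by_cases hx : x ∈ s
      · by_cases hy : y ∈ s
        · refine ⟨m₁.dist ⟨x, hx⟩ ⟨y, hy⟩, ?_, ?_⟩
          · have hne0 : m₁.dist ⟨x, hx⟩ ⟨y, hy⟩ ≠ 0 := fun h =>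
              hxy (congrArg Subtype.val (m₁.eq_of_dist_eq_zero h))
            exact lt_of_le_of_ne (dnn _ _) (Ne.symm hne0)
          · intro c hc
            rcases (hSmem x y c).1 hc with rfl | ⟨⟨p, p'⟩, rfl⟩
            · exact hρs ⟨x, hx⟩ ⟨y, hy⟩
            · have h1 := hρs ⟨x, hx⟩ p
              have h2 := hρs p' ⟨y, hy⟩
              have h3 := dtri ⟨x, hx⟩ p ⟨y, hy⟩
              have h4 := dtri p p' ⟨y, hy⟩
              linarith
        · refine ⟨min (dist x y) (infDist y s),
            lt_min (dist_pos.2 hxy) ((hs.notMem_iff_infDist_pos ⟨p₀, hp₀⟩).1 hy), ?_⟩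
          intro c hc
          rcases (hSmem x y c).1 hc with rfl | ⟨⟨p, p'⟩, rfl⟩
          · exact (min_le_left _ _).trans (hρdist x y)
          · refine (min_le_right _ _).trans ?_
            have h1 : infDist y s ≤ dist y (p' : X) := Metric.infDist_le_dist_of_mem p'.2
            have h2 : dist (p' : X) y ≤ ρ (p' : X) y := hρdist _ _
            have h3 := dnn p p'
            have h4 := hρnn x (p : X)
            rw [dist_comm y (p' : X)] at h1
            linarith
      · refine ⟨min (dist x y) (infDist x s),
          lt_min (dist_pos.2 hxy) ((hs.notMem_iff_infDist_pos ⟨p₀, hp₀⟩).1 hx), ?_⟩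
        intro c hc
        rcases (hSmem x y c).1 hc with rfl | ⟨⟨p, p'⟩, rfl⟩
        · exact (min_le_left _ _).trans (hρdist x y)
        · refine (min_le_right _ _).trans ?_
          have h1 : infDist x s ≤ dist x (p : X) := Metric.infDist_le_dist_of_mem p.2
          have h2 : dist x (p : X) ≤ ρ x (p : X) := hρdist _ _
          have h3 := dnn p p'
          have h4 := hρnn (p' : X) y
          linarith
    obtain ⟨c, hc, hcl⟩ := hlb
    have hcle : c ≤ D x y := le_csInf (hSne x y) hcl
    rw [h0] at hcle
    linarith
  -- forget the definitions of the auxiliary functions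
  have hqdef : ∀ x y, q x y = dist (F x) (F y) := fun _ _ => rfl
  have hρdef : ∀ x y, ρ x y = dist x y + q x y := fun _ _ => rfl
  have hDdef : ∀ x y, D x y = sInf (S x y) := fun _ _ => rfl
  clear_value D S ρ q
  -- topology compatibility
  have hH : ∀ u : Set X, IsOpen u ↔ ∀ x ∈ u, ∃ ε > 0, ∀ y, D x y < ε → y ∈ u := by
    intro u
    constructor
    · intro hu x hxu
      obtain ⟨ε', hε', hball⟩ := Metric.isOpen_iff.1 hu x hxu
      by_cases hx : x ∈ s
      · obtain ⟨δ₀, hδ₀, hII0⟩ := hII ⟨x, hx⟩ (ε' / 2) (by positivity)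
        refine ⟨min (δ₀ / 2) (ε' / 2), by positivity, fun y hDxy => ?_⟩
        obtain ⟨c, hcS, hclt⟩ := exists_lt_of_csInf_lt (hSne x y) (hDdef x y ▸ hDxy)
        apply hball
        rw [Metric.mem_ball]
        have hm1 : min (δ₀ / 2) (ε' / 2) ≤ δ₀ / 2 := min_le_left _ _
        have hm2 : min (δ₀ / 2) (ε' / 2) ≤ ε' / 2 := min_le_right _ _
        rcases (hSmem x y c).1 hcS with rfl | ⟨⟨a, b⟩, rfl⟩
        · have := hρdist x y
          rw [dist_comm]
          linarith
        · have ha : m₁.dist ⟨x, hx⟩ a ≤ ρ x (a : X) := hρs ⟨x, hx⟩ a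
          have hnn1 := dnn a b
          have hnn2 := hρnn x (a : X)
          have hnn3 := hρnn (b : X) y
          have hb : m₁.dist ⟨x, hx⟩ b < δ₀ := by
            have h5 := dtri ⟨x, hx⟩ a b
            linarith
          have hb' : m₁.dist b ⟨x, hx⟩ < δ₀ := by rwa [dcomm] at hb
          have hbx : dist (b : X) x < ε' / 2 := hII0 b hb'
          have hby : dist (b : X) y ≤ ρ (b : X) y := hρdist _ _
          calc dist y x ≤ dist y (b : X) + dist (b : X) x := dist_triangle _ _ _
            _ < ε' := by rw [dist_comm y (b : X)]; linarith
      · refine ⟨min ε' (infDist x s),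
          lt_min hε' ((hs.notMem_iff_infDist_pos ⟨p₀, hp₀⟩).1 hx), fun y hDxy => ?_⟩
        obtain ⟨c, hcS, hclt⟩ := exists_lt_of_csInf_lt (hSne x y) (hDdef x y ▸ hDxy)
        rcases (hSmem x y c).1 hcS with rfl | ⟨⟨a, b⟩, rfl⟩
        · apply hball
          rw [Metric.mem_ball, dist_comm]
          have := hρdist x y
          have := min_le_left ε' (infDist x s)
          linarith
        · exfalso
          have h1 : infDist x s ≤ dist x (a : X) := Metric.infDist_le_dist_of_mem a.2
          have h2 : dist x (a : X) ≤ ρ x (a : X) := hρdist _ _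
          have h3 := dnn a b
          have h4 := hρnn (b : X) y
          have h5 := min_le_right ε' (infDist x s)
          linarith
    · intro h
      rw [Metric.isOpen_iff]
      intro x hxu
      obtain ⟨ε, hε, hDball⟩ := h x hxu
      obtain ⟨δ, hδ, hδF⟩ := hFcontAt x (ε / 2) (by positivity)
      refine ⟨min δ (ε / 2), by positivity, fun y hy => ?_⟩
      rw [Metric.mem_ball] at hy
      apply hDball
      have h1 : dist x y < δ := by
        rw [dist_comm] at hy
        exact lt_of_lt_of_le hy (min_le_left _ _)
      have h2 : dist x y < ε / 2 := by
        rw [dist_comm] at hy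
        exact lt_of_lt_of_le hy (min_le_right _ _)
      have h3 := hδF y h1
      have h4 : q x y < ε / 2 := by rw [hqdef]; exact h3
      calc D x y ≤ ρ x y := hDρ x y
        _ = dist x y + q x y := hρdef x y
        _ < ε := by linarith
  exact ⟨MetricSpace.ofDistTopology D hDself hDcomm hDtri hH hDpos, rfl, fun a b => hDs a b⟩

/-- Hausdorff's metric extension theorem: if `X₁` is a closed subspace of a metrizable
space `X₂` and `d₁` is a compatible metric on `X₁`, then there is a compatible metric
on `X₂` extending `d₁`. -/
theorem hausdorff_metric_extension {X₂ : Type*} [t : TopologicalSpace X₂]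
    [TopologicalSpace.MetrizableSpace X₂] (s : Set X₂) (hs : IsClosed s)
    (m₁ : MetricSpace s)
    (hcompat : m₁.toUniformSpace.toTopologicalSpace = instTopologicalSpaceSubtype) :
    ∃ m₂ : MetricSpace X₂, m₂.toUniformSpace.toTopologicalSpace = t ∧
      ∀ x y : s, m₂.dist (x : X₂) (y : X₂) = m₁.dist x y := by
  obtain ⟨mσ, hσ⟩ : ∃ m : MetricSpace X₂, m.toUniformSpace.toTopologicalSpace = t :=
    ⟨TopologicalSpace.metrizableSpaceMetric X₂, rfl⟩
  subst hσ
  letI := mσ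
  exact hausdorff_metric_extension_aux s hs m₁ hcompat
end

section
/- Let X be a metric space, Y a topological space, Z a metric space, and f : X × Y → Z a function such that f(·,y) is continuous for every y ∈ Y, and there is a dense set D ⊆ X such that f(x,·) is continuous for every x ∈ D. Then for every closed F ⊆ Z, the preimage f⁻¹(F) is a G_δ set in X × Y; equivalently, f⁻¹(V) is F_σ for every open V ⊆ Z. -/
open Set

theorem vnsc_key {X Y Z : Type*} [MetricSpace X]
    [TopologicalSpace Y] [MetricSpace Z] (f : X × Y → Z)
    (hy : ∀ y : Y, Continuous fun x => f (x, y))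
    (D : Set X) (hD : Dense D) (hx : ∀ x ∈ D, Continuous fun y => f (x, y))
    (F : Set Z) (hF : IsClosed F) :
    ∃ U : ℕ → Set (X × Y), (∀ n, IsOpen (U n)) ∧ f ⁻¹' F = ⋂ n, U n := by
  refine ⟨fun n => ⋃ x' ∈ D, (Metric.ball x' (1/(n+1))) ×ˢ
      ((fun y => f (x', y)) ⁻¹' Metric.thickening (1/(n+1)) F), ?_, ?_⟩
  · intro n
    refine isOpen_iUnion fun x' => isOpen_iUnion fun hx' => ?_
    exact Metric.isOpen_ball.prod (Metric.isOpen_thickening.preimage (hx x' hx'))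
  · ext ⟨x, y⟩
    simp only [mem_preimage, mem_iInter, mem_iUnion, mem_prod, Metric.mem_ball]
    constructor
    · intro h n
      have hpos : (0:ℝ) < 1/(n+1) := by positivity
      obtain ⟨δ, hδ, hδ'⟩ := Metric.continuous_iff.1 (hy y) x (1/(n+1)) hpos
      obtain ⟨x', hx'D, hx'd⟩ := hD.exists_dist_lt x (lt_min hδ hpos)
      refine ⟨x', hx'D, lt_of_lt_of_le hx'd (min_le_right _ _), ?_⟩
      refine Metric.mem_thickening_iff.2 ⟨f (x, y), h, ?_⟩
      exact hδ' x' (by rw [dist_comm]; exact lt_of_lt_of_le hx'd (min_le_left _ _))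
    · intro h
      rw [← hF.closure_eq]
      refine Metric.mem_closure_iff.2 fun ε hε => ?_
      obtain ⟨δ, hδ, hδ'⟩ := Metric.continuous_iff.1 (hy y) x (ε/2) (by positivity)
      obtain ⟨n, hn⟩ := exists_nat_one_div_lt (lt_min hδ (by positivity : (0:ℝ) < ε/2))
      obtain ⟨x', hx'D, hx'd, hx'F⟩ := h n
      obtain ⟨z, hzF, hzd⟩ := Metric.mem_thickening_iff.1 hx'F
      refine ⟨z, hzF, ?_⟩
      have h1 : dist (f (x', y)) (f (x, y)) < ε/2 :=
        hδ' x' (lt_of_lt_of_le (by rw [dist_comm]; exact hx'd.trans hn) (min_le_left _ _))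
      have h2 : dist (f (x', y)) z < ε/2 :=
        hzd.trans (hn.trans_le (min_le_right _ _))
      calc dist (f (x, y)) z ≤ dist (f (x, y)) (f (x', y)) + dist (f (x', y)) z := dist_triangle _ _ _
        _ < ε/2 + ε/2 := by rw [dist_comm (f (x,y))]; exact add_lt_add h1 h2
        _ = ε := by ring

/-- Kuratowski–Montgomery type theorem (case α = 0): if `X`, `Z` are metric spaces,
`Y` a topological space, `f : X × Y → Z` is continuous in the first variable for every
`y` and continuous in the second variable for every `x` in a dense set `D`, then the
preimage of every closed set is `G_δ` (equivalently, the preimage of every open set is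
`F_σ`). -/
theorem vnsc_lebesgue_classification {X Y Z : Type*} [MetricSpace X]
    [TopologicalSpace Y] [MetricSpace Z] (f : X × Y → Z)
    (hy : ∀ y : Y, Continuous fun x => f (x, y))
    (D : Set X) (hD : Dense D) (hx : ∀ x ∈ D, Continuous fun y => f (x, y)) :
    (∀ F : Set Z, IsClosed F → IsGδ (f ⁻¹' F)) ∧
      (∀ V : Set Z, IsOpen V →
        ∃ C : ℕ → Set (X × Y), (∀ n, IsClosed (C n)) ∧ f ⁻¹' V = ⋃ n, C n) := by
  constructor
  · intro F hF
    obtain ⟨U, hU, hUeq⟩ := vnsc_key f hy D hD hx F hF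
    rw [hUeq]
    exact .iInter fun n => (hU n).isGδ
  · intro V hV
    obtain ⟨U, hU, hUeq⟩ := vnsc_key f hy D hD hx Vᶜ hV.isClosed_compl
    refine ⟨fun n => (U n)ᶜ, fun n => (hU n).isClosed_compl, ?_⟩
    have : f ⁻¹' V = (f ⁻¹' Vᶜ)ᶜ := by simp
    rw [this, hUeq, compl_iInter]
end

section
/- Let X, Y be topological spaces, Z a metric space, f : X × Y → Z. Suppose there are a sequence of locally finite open covers (U_{i,n} : i ∈ I_n) of X and points x_{i,n} ∈ X such that: (a) whenever x ∈ U_{i_n,n} for all n, then x_{i_n,n} → x; (b) f(·,y) is continuous for each y; (c) f(x_{i,n}, ·) is continuous for each i,n. Then for every closed set F ⊆ Z, writing F = ⋂_m G_m with G_m open and cl(G_{m+1}) ⊆ G_m, one has f⁻¹(F) = ⋂_{m=1}^∞ ⋃_{n≥m} ⋃_{i∈I_n} U_{i,n} × (f(x_{i,n},·))⁻¹(G_m). -/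
open Filter Set Topology

/-! The hypothesis on the covers says more than its statement suggests: for every neighbourhood `W`
of `x`, eventually *all* the points `p n i` with `x ∈ U n i` lie in `W` (otherwise a selection of bad
indices would be a sequence violating it). Given this, `f (x, y) ∈ G m` for an open `G m` is seen by
continuity of `f (·, y)` along the points `p n i`, and conversely the points `f (p n i, y) ∈ G m`
with `n ≥ m` accumulate at `f (x, y)`, which therefore lies in every `closure (G (m + 1)) ⊆ G m`. -/

section StarConvergence

variable {X Z : Type*} [TopologicalSpace X] [TopologicalSpace Z] {ι : ℕ → Type*}
  {U : (n : ℕ) → ι n → Set X} {p : (n : ℕ) → ι n → X} {x : X}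

theorem eventually_forall_mem_of_tendsto_of_mem (hcov : ∀ n, ∃ i, x ∈ U n i)
    (hconv : ∀ idx : (n : ℕ) → ι n, (∀ n, x ∈ U n (idx n)) →
      Tendsto (fun n => p n (idx n)) atTop (𝓝 x))
    {W : Set X} (hW : W ∈ 𝓝 x) : ∀ᶠ n in atTop, ∀ i, x ∈ U n i → p n i ∈ W := by
  have hselect : ∀ n, ∃ i, x ∈ U n i ∧ ((∃ j, x ∈ U n j ∧ p n j ∉ W) → p n i ∉ W) := by
    intro n
    by_cases hbad : ∃ j, x ∈ U n j ∧ p n j ∉ W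
    · obtain ⟨j, hj, hjW⟩ := hbad
      exact ⟨j, hj, fun _ => hjW⟩
    · obtain ⟨i, hi⟩ := hcov n
      exact ⟨i, hi, fun h => absurd h hbad⟩
  choose idx hidx hbad using hselect
  filter_upwards [hconv idx hidx hW] with n hn i hi
  by_contra hiW
  exact hbad n ⟨i, hi, hiW⟩ hn

variable {g : X → Z}

theorem exists_ge_mem_preimage_of_isOpen
    (hstar : ∀ W ∈ 𝓝 x, ∀ᶠ n in atTop, ∀ i, x ∈ U n i → p n i ∈ W) (hg : ContinuousAt g x)
    (hcov : ∀ n, ∃ i, x ∈ U n i) {G : Set Z} (hG : IsOpen G) (hx : g x ∈ G) (m : ℕ) :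
    ∃ n, m ≤ n ∧ ∃ i, x ∈ U n i ∧ g (p n i) ∈ G := by
  obtain ⟨n, hnG, hmn⟩ :=
    ((hstar _ (hg.preimage_mem_nhds (hG.mem_nhds hx))).and (eventually_ge_atTop m)).exists
  obtain ⟨i, hi⟩ := hcov n
  exact ⟨n, hmn, i, hi, hnG i hi⟩

theorem mem_closure_of_forall_exists_ge
    (hstar : ∀ W ∈ 𝓝 x, ∀ᶠ n in atTop, ∀ i, x ∈ U n i → p n i ∈ W) (hg : ContinuousAt g x)
    {G : ℕ → Set Z} (hanti : Antitone G)
    (h : ∀ m, ∃ n, m ≤ n ∧ ∃ i, x ∈ U n i ∧ g (p n i) ∈ G m) (m : ℕ) :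
    g x ∈ closure (G m) := by
  refine mem_closure_iff_nhds.2 fun V hV => ?_
  obtain ⟨N, hN⟩ := eventually_atTop.1 (hstar _ (hg.preimage_mem_nhds hV))
  obtain ⟨n, hn, i, hi, hiG⟩ := h (max N m)
  exact ⟨g (p n i), hN n (le_of_max_le_left hn) i hi, hanti (le_max_right N m) hiG⟩

end StarConvergence

theorem vnsc_preimage_identity_general {X Y Z : Type*} [TopologicalSpace X]
    [TopologicalSpace Y] [MetricSpace Z] (f : X × Y → Z)
    (ι : ℕ → Type*) (U : (n : ℕ) → ι n → Set X) (p : (n : ℕ) → ι n → X)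
    (hcov : ∀ n, ⋃ i, U n i = univ)
    (hconv : ∀ (x : X) (idx : (n : ℕ) → ι n), (∀ n, x ∈ U n (idx n)) →
      Tendsto (fun n => p n (idx n)) atTop (nhds x))
    (hy : ∀ y : Y, Continuous fun x => f (x, y))
    (F : Set Z) (G : ℕ → Set Z) (hG : ∀ m, IsOpen (G m))
    (hmono : ∀ m, closure (G (m + 1)) ⊆ G m) (hFeq : F = ⋂ m, G m) :
    f ⁻¹' F = ⋂ m : ℕ, ⋃ n : ℕ, ⋃ (_ : m ≤ n), ⋃ i : ι n,
      (U n i) ×ˢ ((fun y => f (p n i, y)) ⁻¹' G m) := by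
  have hanti : Antitone G := antitone_nat_of_succ_le fun m => subset_closure.trans (hmono m)
  ext ⟨x, y⟩
  have hcovx : ∀ n, ∃ i, x ∈ U n i := fun n => mem_iUnion.1 ((hcov n).ge (mem_univ x))
  have hstar := fun W (hW : W ∈ 𝓝 x) =>
    eventually_forall_mem_of_tendsto_of_mem hcovx (hconv x) hW
  have hg : ContinuousAt (fun x => f (x, y)) x := (hy y).continuousAt
  simp only [hFeq, mem_preimage, mem_iInter, mem_iUnion, mem_prod, exists_prop]
  constructor
  · exact fun hxy m => exists_ge_mem_preimage_of_isOpen hstar hg hcovx (hG m) (hxy m) m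
  · exact fun h m => hmono m (mem_closure_of_forall_exists_ge hstar hg hanti h (m + 1))

/-- The key identity in the Lebesgue classification theorem: under the strong
PP-structure on `X` and separate continuity assumptions on `f`, for a closed
`F = ⋂ m, G m` with `G m` open and `closure (G (m+1)) ⊆ G m`, one has
`f ⁻¹' F = ⋂ m, ⋃_{n ≥ m}, ⋃ i, U n i ×ˢ (f (x n i, ·)) ⁻¹' (G m)`. -/
theorem vnsc_preimage_identity {X Y Z : Type*} [TopologicalSpace X]
    [TopologicalSpace Y] [MetricSpace Z] (f : X × Y → Z)
    (ι : ℕ → Type*) (U : (n : ℕ) → ι n → Set X) (p : (n : ℕ) → ι n → X)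
    (hopen : ∀ n i, IsOpen (U n i)) (hlf : ∀ n, LocallyFinite (U n))
    (hcov : ∀ n, ⋃ i, U n i = univ)
    (hconv : ∀ (x : X) (idx : (n : ℕ) → ι n), (∀ n, x ∈ U n (idx n)) →
      Tendsto (fun n => p n (idx n)) atTop (nhds x))
    (hy : ∀ y : Y, Continuous fun x => f (x, y))
    (hp : ∀ (n : ℕ) (i : ι n), Continuous fun y => f (p n i, y))
    (F : Set Z) (hF : IsClosed F) (G : ℕ → Set Z) (hG : ∀ m, IsOpen (G m))
    (hmono : ∀ m, closure (G (m + 1)) ⊆ G m) (hFeq : F = ⋂ m, G m) :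
    f ⁻¹' F = ⋂ m : ℕ, ⋃ n : ℕ, ⋃ (_ : m ≤ n), ⋃ i : ι n,
      (U n i) ×ˢ ((fun y => f (p n i, y)) ⁻¹' G m) :=
  vnsc_preimage_identity_general f ι U p hcov hconv hy F G hG hmono hFeq
end

section
/- Let X be a metric space, Y a topological space, Z a metric space covered by closed sets (Z_n)_{n∈ℕ} such that every convergent sequence in Z has all its terms in some single Z_n (property (*)). Let f : X × Y → Z be such that f(·,y) is continuous for each y ∈ Y, and f(x,·) is continuous for each x in a dense set D ⊆ X. Then there exists a sequence (B_n) of closed (in fact zero) subsets of X × Y with ⋃_n B_n = X × Y and f(B_n) ⊆ Z_n for every n. -/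
/-!
For each `k` take a locally finite open refinement `(V k d)_{d ∈ D}` of the cover of `X` by the
balls `ball d (2⁻ᵏ)`, `d ∈ D`, and let `B n` be the set of `(x, y)` such that `f (d, y) ∈ Zn n`
whenever `x ∈ V k d`. Each `B n` is a countable intersection of locally finite intersections of
zero sets, hence a zero set. If `(x, y) ∈ B n`, centres `d_k` with `x ∈ V k d_k` converge to `x`,
so `f (x, y) ∈ Zn n` because `Zn n` is closed. Conversely, the values `f (d, y)` with
`x ∈ V k d`, finitely many for each `k`, converge to `f (x, y)` along the cofinite filter;
enumerated as one sequence, property (*) puts all of them into a single `Zn n`.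
-/

open Filter Set Topology Metric

def IsZeroSet {α : Type*} [TopologicalSpace α] (s : Set α) : Prop :=
  ∃ g : α → ℝ, Continuous g ∧ s = g ⁻¹' {0}

namespace IsZeroSet

variable {α : Type*} [TopologicalSpace α]

theorem exists_nonneg {s : Set α} (hs : IsZeroSet s) :
    ∃ g : α → ℝ, Continuous g ∧ 0 ≤ g ∧ s = g ⁻¹' {0} := by
  obtain ⟨g, hg, rfl⟩ := hs
  exact ⟨fun x => |g x|, hg.abs, fun x => abs_nonneg _, by ext; simp⟩

theorem isClosed {s : Set α} (hs : IsZeroSet s) : IsClosed s := by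
  obtain ⟨g, hg, rfl⟩ := hs
  exact isClosed_singleton.preimage hg

theorem preimage {β : Type*} [TopologicalSpace β] {s : Set β} (hs : IsZeroSet s) {f : α → β}
    (hf : Continuous f) : IsZeroSet (f ⁻¹' s) := by
  obtain ⟨g, hg, rfl⟩ := hs
  exact ⟨g ∘ f, hg.comp hf, rfl⟩

theorem union {s t : Set α} (hs : IsZeroSet s) (ht : IsZeroSet t) : IsZeroSet (s ∪ t) := by
  obtain ⟨g, hg, rfl⟩ := hs
  obtain ⟨h, hh, rfl⟩ := ht
  exact ⟨g * h, hg.mul hh, by ext; simp⟩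

theorem iInter_of_locallyFinite {ι : Type*} {s : ι → Set α} (hs : ∀ i, IsZeroSet (s i))
    (hlf : LocallyFinite fun i => (s i)ᶜ) : IsZeroSet (⋂ i, s i) := by
  choose g hg hg0 hgs using fun i => (hs i).exists_nonneg
  have hsupp : ∀ i, Function.support (g i) = (s i)ᶜ := fun i => by ext x; simp [hgs i]
  refine ⟨fun x => ∑ᶠ i, g i x, continuous_finsum hg (by simpa only [hsupp] using hlf), ?_⟩
  ext x
  have hfin : (Function.support fun i => g i x).Finite :=
    (hlf.point_finite x).subset fun i hi => by simpa [hgs] using hi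
  simp only [mem_iInter, hgs, mem_preimage, mem_singleton_iff]
  refine ⟨fun h => by simp [h], fun h => ?_⟩
  by_contra! hne
  obtain ⟨i, hi⟩ := hne
  exact (finsum_pos (fun i => hg0 i x) ⟨i, (hg0 i x).lt_of_ne' hi⟩ hfin).ne' h

theorem iInter_nat {s : ℕ → Set α} (hs : ∀ n, IsZeroSet (s n)) : IsZeroSet (⋂ n, s n) := by
  choose g hg hg0 hgs using fun n => (hs n).exists_nonneg
  -- truncation at `(1/2) ^ n` makes the series converge uniformly without changing zero sets
  set t : ℕ → α → ℝ := fun n x => min (g n x) ((1 / 2) ^ n)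
  have ht0 : ∀ n x, 0 ≤ t n x := fun n x => le_min (hg0 n x) (by positivity)
  have htle : ∀ n x, t n x ≤ (1 / 2) ^ n := fun n x => min_le_right _ _
  have hgeom : Summable fun n : ℕ => (1 / 2 : ℝ) ^ n := summable_geometric_two
  refine ⟨fun x => ∑' n, t n x, continuous_tsum (fun n => (hg n).min continuous_const) hgeom
    fun n x => by rw [Real.norm_of_nonneg (ht0 n x)]; exact htle n x, ?_⟩
  ext x
  have hsum : Summable fun n => t n x := hgeom.of_nonneg_of_le (ht0 · x) (htle · x)
  simp only [mem_iInter, hgs, mem_preimage, mem_singleton_iff, ← hsum.hasSum_iff,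
    hasSum_zero_iff_of_nonneg (ht0 · x), funext_iff, Pi.zero_apply, t]
  refine forall_congr' fun n => ?_
  have hpos : (0 : ℝ) < (1 / 2) ^ n := by positivity
  constructor
  · intro h; simp [h]
  · intro h
    rcases min_choice (g n x) ((1 / 2) ^ n) with h' | h' <;> rw [h'] at h
    · exact h
    · exact absurd h hpos.ne'

end IsZeroSet

theorem IsClosed.isZeroSet {α : Type*} [TopologicalSpace α] [PerfectlyNormalSpace α] {s : Set α}
    (hs : IsClosed s) : IsZeroSet s := by
  obtain ⟨g, rfl, -⟩ := perfectlyNormalSpace_iff_forall_isClosed_preimage_zero.mp ‹_› s hs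
  exact ⟨g, g.continuous, rfl⟩

theorem isZeroSet_setOf_forall_mem_imp_mem {ι X Y Z : Type*} [TopologicalSpace X]
    [TopologicalSpace Y] [TopologicalSpace Z] [PerfectlyNormalSpace X] [PerfectlyNormalSpace Z]
    {V : ℕ → ι → Set X} (hVo : ∀ k i, IsOpen (V k i)) (hVlf : ∀ k, LocallyFinite (V k))
    {F : ι → Y → Z} (hF : ∀ i, Continuous (F i)) {S : Set Z} (hS : IsClosed S) :
    IsZeroSet {p : X × Y | ∀ k i, p.1 ∈ V k i → F i p.2 ∈ S} := by
  have : {p : X × Y | ∀ k i, p.1 ∈ V k i → F i p.2 ∈ S} =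
      ⋂ k, ⋂ i, (Prod.fst ⁻¹' (V k i)ᶜ ∪ Prod.snd ⁻¹' (F i ⁻¹' S)) := by
    ext p; simp [imp_iff_not_or]
  rw [this]
  refine IsZeroSet.iInter_nat fun k => IsZeroSet.iInter_of_locallyFinite (fun i => ?_) ?_
  · exact ((hVo k i).isClosed_compl.isZeroSet.preimage continuous_fst).union
      ((hS.isZeroSet.preimage (hF i)).preimage continuous_snd)
  · refine ((hVlf k).preimage_continuous continuous_fst).subset fun i p hp => ?_
    simp only [compl_union, mem_inter_iff, mem_compl_iff, mem_preimage, not_not] at hp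
    exact hp.1

theorem exists_forall_mem_of_tendsto_cofinite {ι Z : Type*} [Countable ι] [TopologicalSpace Z]
    {Zn : ℕ → Set Z} (hstar : ∀ (z : ℕ → Z) (l : Z), Tendsto z atTop (𝓝 l) → ∃ n, ∀ k, z k ∈ Zn n)
    {z : ι → Z} {l : Z} (hz : Tendsto z cofinite (𝓝 l)) : ∃ n, ∀ i, z i ∈ Zn n := by
  -- padding by the constant `l` makes the index type countably infinite, hence `≃ ℕ`
  let w : ι ⊕ ℕ → Z := Sum.elim z fun _ => l
  have hw : Tendsto w cofinite (𝓝 l) := by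
    rw [Tendsto, map_sumElim_eq, Sum.inl_injective.comap_cofinite_eq]
    exact sup_le hz tendsto_const_nhds
  obtain ⟨e⟩ : Nonempty (ℕ ≃ ι ⊕ ℕ) :=
    (nonempty_denumerable _).map fun _ => (@Denumerable.eqv _ ‹_›).symm
  obtain ⟨n, hn⟩ := hstar (w ∘ e) l <| by
    rw [← Nat.cofinite_eq_atTop]
    exact hw.comp e.injective.tendsto_cofinite
  exact ⟨n, fun i => by simpa [w] using hn (e.symm (Sum.inl i))⟩

section Metric

variable {X : Type*} [PseudoMetricSpace X]

theorem Dense.exists_locallyFinite_refinement_ball {D : Set X} (hD : Dense D) {r : ℝ}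
    (hr : 0 < r) : ∃ V : D → Set X, (∀ d, IsOpen (V d)) ∧ ⋃ d, V d = univ ∧ LocallyFinite V ∧
      ∀ d, V d ⊆ ball (d : X) r :=
  precise_refinement _ (fun _ => isOpen_ball) <| by
    rw [← (dense_iff_iUnion_ball D).mp hD r hr, biUnion_eq_iUnion]

theorem tendsto_cofinite_of_dist_lt {κ : ℕ → Type*} [∀ k, Finite (κ k)] {c : (Σ k, κ k) → X}
    {x : X} {r : ℕ → ℝ} (hr : Tendsto r atTop (𝓝 0)) (hc : ∀ j, dist (c j) x < r j.1) :
    Tendsto c cofinite (𝓝 x) := by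
  have hfst : Tendsto (Sigma.fst : (Σ k, κ k) → ℕ) cofinite atTop :=
    Nat.cofinite_eq_atTop ▸ Tendsto.cofinite_of_finite_preimage_singleton fun k => by
      rw [← range_sigmaMk]; infer_instance
  rw [tendsto_iff_dist_tendsto_zero]
  exact squeeze_zero (fun _ => dist_nonneg) (fun j => (hc j).le) (hr.comp hfst)

variable {ι Z : Type*} [TopologicalSpace Z] {V : ℕ → ι → Set X} {c : ι → X} {r : ℕ → ℝ}

theorem exists_forall_mem_of_forall_subset_ball {Zn : ℕ → Set Z}
    (hstar : ∀ (z : ℕ → Z) (l : Z), Tendsto z atTop (𝓝 l) → ∃ n, ∀ k, z k ∈ Zn n)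
    (hr : Tendsto r atTop (𝓝 0)) (hVc : ∀ k i, V k i ⊆ ball (c i) (r k)) {x : X}
    (hfin : ∀ k, {i | x ∈ V k i}.Finite) {g : X → Z} (hg : ContinuousAt g x) :
    ∃ n, ∀ k i, x ∈ V k i → g (c i) ∈ Zn n := by
  have := fun k => (hfin k).to_subtype
  have hc : Tendsto (fun j : Σ k, {i | x ∈ V k i} => c j.2) cofinite (𝓝 x) :=
    tendsto_cofinite_of_dist_lt hr fun j => by
      simpa [dist_comm] using hVc j.1 j.2 j.2.2
  obtain ⟨n, hn⟩ := exists_forall_mem_of_tendsto_cofinite hstar (hg.tendsto.comp hc)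
  exact ⟨n, fun k i hi => hn ⟨k, i, hi⟩⟩

theorem mem_of_forall_subset_ball (hr : Tendsto r atTop (𝓝 0))
    (hVc : ∀ k i, V k i ⊆ ball (c i) (r k)) {x : X} (hx : ∀ k, ∃ i, x ∈ V k i) {g : X → Z}
    (hg : ContinuousAt g x) {S : Set Z} (hS : IsClosed S)
    (hgS : ∀ k i, x ∈ V k i → g (c i) ∈ S) : g x ∈ S := by
  choose i hi using hx
  have hc : Tendsto (fun k => c (i k)) atTop (𝓝 x) :=
    tendsto_iff_dist_tendsto_zero.2 <| squeeze_zero (fun _ => dist_nonneg)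
      (fun k => (by simpa [dist_comm] using hVc k (i k) (hi k) : dist (c (i k)) x < r k).le) hr
  exact hS.mem_of_tendsto (hg.tendsto.comp hc) (Eventually.of_forall fun k => hgS k (i k) (hi k))

end Metric

theorem vnsc_zero_set_decomposition_general {X Y Z : Type*} [MetricSpace X]
    [TopologicalSpace Y] [MetricSpace Z] (Zn : ℕ → Set Z)
    (hZclosed : ∀ n, IsClosed (Zn n))
    (hstar : ∀ (z : ℕ → Z) (l : Z), Tendsto z atTop (nhds l) → ∃ n, ∀ k, z k ∈ Zn n)
    (f : X × Y → Z) (hy : ∀ y : Y, Continuous fun x => f (x, y))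
    (D : Set X) (hD : Dense D) (hx : ∀ x ∈ D, Continuous fun y => f (x, y)) :
    ∃ B : ℕ → Set (X × Y), (∀ n, IsClosed (B n)) ∧
      (∀ n, ∃ g : X × Y → ℝ, Continuous g ∧ B n = g ⁻¹' {0}) ∧
      (⋃ n, B n = univ) ∧ ∀ n, f '' B n ⊆ Zn n := by
  choose V hVo hVcov hVlf hVsub using fun k : ℕ =>
    hD.exists_locallyFinite_refinement_ball (pow_pos (one_half_pos (α := ℝ)) k)
  have hr : Tendsto (fun k : ℕ => (1 / 2 : ℝ) ^ k) atTop (𝓝 0) :=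
    tendsto_pow_atTop_nhds_zero_of_lt_one (by norm_num) (by norm_num)
  let B n : Set (X × Y) := {p | ∀ k d, p.1 ∈ V k d → f (d, p.2) ∈ Zn n}
  have hB n : IsZeroSet (B n) :=
    isZeroSet_setOf_forall_mem_imp_mem hVo hVlf (fun d => hx d d.2) (hZclosed n)
  refine ⟨B, fun n => (hB n).isClosed, hB, ?_, ?_⟩
  · refine eq_univ_of_forall fun ⟨x, y⟩ => mem_iUnion.2 ?_
    exact exists_forall_mem_of_forall_subset_ball (c := Subtype.val) (g := fun x => f (x, y))
      hstar hr hVsub (fun k => (hVlf k).point_finite x) (hy y).continuousAt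
  · rintro n _ ⟨⟨x, y⟩, hp, rfl⟩
    exact mem_of_forall_subset_ball (c := Subtype.val) (g := fun x => f (x, y)) hr hVsub
      (fun k => mem_iUnion.1 (hVcov k ▸ mem_univ x)) (hy y).continuousAt (hZclosed n) hp

/-- If `X`, `Z` are metric spaces, `Y` a topological space, `(Z n)` a closed cover of
`Z` with property `(*)`, and `f : X × Y → Z` is continuous in the first variable and
continuous in the second variable for `x` in a dense set `D`, then `X × Y` is covered
by countably many closed (in fact zero) sets `B n` with `f '' (B n) ⊆ Z n`. -/
theorem vnsc_zero_set_decomposition {X Y Z : Type*} [MetricSpace X]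
    [TopologicalSpace Y] [MetricSpace Z] (Zn : ℕ → Set Z)
    (hZclosed : ∀ n, IsClosed (Zn n)) (hZcover : ⋃ n, Zn n = univ)
    (hstar : ∀ (z : ℕ → Z) (l : Z), Tendsto z atTop (nhds l) → ∃ n, ∀ k, z k ∈ Zn n)
    (f : X × Y → Z) (hy : ∀ y : Y, Continuous fun x => f (x, y))
    (D : Set X) (hD : Dense D) (hx : ∀ x ∈ D, Continuous fun y => f (x, y)) :
    ∃ B : ℕ → Set (X × Y), (∀ n, IsClosed (B n)) ∧
      (∀ n, ∃ g : X × Y → ℝ, Continuous g ∧ B n = g ⁻¹' {0}) ∧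
      (⋃ n, B n = univ) ∧ ∀ n, f '' B n ⊆ Zn n :=
  vnsc_zero_set_decomposition_general Zn hZclosed hstar f hy D hD hx
end
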